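/- Let A = ⊕_{n∈ℕ} A_n be a graded ring. (1) Let M = ⊕_{n∈ℕ} M_n be a graded A-module and S a set of homogeneous elements of M. Then M is generated by S as an A-module if and only if for every n ≥ 0 the A/A_{≥n}-module M/M_{≥n} is generated by the image of S. (2) Let A → B = ⊕_{n∈ℕ} B_n be a morphism of graded rings, J = ⊕_{n∈ℕ} J_n ⊂ B a graded ideal, and S ⊂ B a set of homogeneous elements. Then the A-module B/J is generated by the image of S if and only if the A/A_{≥1}-module B/(J + A_{≥1}B) is generated by the image of S. -/

import Mathlib

/-!
The degree-`d` component of an `A`-linear combination of homogeneous elements is a combination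
of those of degree `≤ d`, because multiplying by a homogeneous scalar only raises degrees. Hence
spans of homogeneous sets are homogeneous, and `M_{≥n}` has no components in degrees `< n`.

(1) If `M = span S + M_{≥k+1}`, write a homogeneous `m` of degree `k` as `s + t` accordingly;
its degree-`k` component is `m = s_k + 0`, and `s_k ∈ span S`.

(2) is graded Nakayama: a homogeneous submodule `N` of `M` with `N + A₊M = M` is all of `M`.
By induction on `d`, a homogeneous `m` of degree `d` is `n + y` with `n ∈ N`, `y ∈ A₊M`, and
`m = n_d + y_d`, where `y_d` is a combination of elements of degree `< d`, already in `N`.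
Apply this in `B` to `N = span S + J`, using `A₊B = A₊ • B`.
-/

open DirectSum

namespace GradedModule

variable {A : Type u} [CommRing A] (𝒜 : ℕ → AddSubgroup A) [GradedRing 𝒜]
  {M : Type v} [AddCommGroup M] [Module A M] (ℳ : ℕ → AddSubgroup M)
  [SetLike.GradedSMul 𝒜 ℳ] [Decomposition ℳ]

omit [GradedRing 𝒜] in
theorem coe_decompose_smul_of_mem {i : ℕ} {a : A} (ha : a ∈ 𝒜 i) (x : M) (d : ℕ) :
    (decompose ℳ (a • x) d : M) =
      if i ≤ d then a • (decompose ℳ x (d - i) : M) else 0 := by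
  induction x using Decomposition.inductionOn ℳ with
  | zero => simp
  | @homogeneous j m =>
    have ham : a • (m : M) ∈ ℳ (i + j) := SetLike.GradedSMul.smul_mem ha m.2
    rw [decompose_of_mem ℳ ham, decompose_coe, coe_of_apply, coe_of_apply]
    split_ifs <;> first | rfl | (exfalso; omega) | simp
  | add x y hx hy =>
    rw [smul_add, decompose_add, DirectSum.add_apply, AddSubgroup.coe_add, hx, hy,
      decompose_add, DirectSum.add_apply, AddSubgroup.coe_add]
    split_ifs <;> simp

open Classical in
theorem coe_decompose_smul (a : A) (x : M) (d : ℕ) :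
    (decompose ℳ (a • x) d : M) = ∑ i ∈ (decompose 𝒜 a).support,
      if i ≤ d then (decompose 𝒜 a i : A) • (decompose ℳ x (d - i) : M) else 0 := by
  conv_lhs => rw [← sum_support_decompose 𝒜 a, Finset.sum_smul, decompose_sum,
    DFinsupp.finsetSum_apply, AddSubgroup.val_finsetSum]
  exact Finset.sum_congr rfl fun i _ =>
    coe_decompose_smul_of_mem 𝒜 ℳ (SetLike.coe_mem _) x d

include 𝒜 in
theorem coe_decompose_mem_span_biUnion_le {g : ℕ → Set M} (hg : ∀ k, g k ⊆ ℳ k) {x : M}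
    (hx : x ∈ Submodule.span A (⋃ k, g k)) (d : ℕ) :
    (decompose ℳ x d : M) ∈ Submodule.span A (⋃ k ≤ d, g k) := by
  classical
  induction hx using Submodule.span_induction generalizing d with
  | mem x hx =>
    obtain ⟨k, hxk⟩ := Set.mem_iUnion.mp hx
    rw [decompose_of_mem ℳ (hg k hxk), coe_of_apply]
    split_ifs with hkd
    · exact Submodule.subset_span (Set.mem_iUnion₂_of_mem hkd.le hxk)
    · exact zero_mem _
  | zero => simp
  | add x y _ _ hx hy =>
    rw [decompose_add, DirectSum.add_apply, AddSubgroup.coe_add]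
    exact add_mem (hx d) (hy d)
  | smul a x _ hx =>
    rw [coe_decompose_smul 𝒜]
    refine Submodule.sum_mem _ fun i _ => ?_
    split_ifs
    · refine Submodule.smul_mem _ _ (Submodule.span_mono ?_ (hx (d - i)))
      exact Set.biUnion_subset_biUnion_left fun k hk => le_trans hk (Nat.sub_le d i)
    · exact zero_mem _

theorem eq_top_of_forall_mem_of_mem {N : Submodule A M} (h : ∀ k, ∀ m ∈ ℳ k, m ∈ N) :
    N = ⊤ :=
  eq_top_iff.mpr fun m _ =>
    Decomposition.inductionOn ℳ (zero_mem N) (fun m => h _ _ m.2) (fun _ _ => add_mem) m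

theorem span_iUnion_eq_top : Submodule.span A (⋃ k, (ℳ k : Set M)) = ⊤ :=
  eq_top_of_forall_mem_of_mem ℳ fun k _ hm =>
    Submodule.subset_span (Set.mem_iUnion_of_mem k hm)

theorem isHomogeneous_sup {N N' : Submodule A M} (hN : N.IsHomogeneous ℳ)
    (hN' : N'.IsHomogeneous ℳ) : (N ⊔ N').IsHomogeneous ℳ := by
  intro d x hx
  obtain ⟨y, hy, y', hy', rfl⟩ := Submodule.mem_sup.mp hx
  rw [decompose_add, DirectSum.add_apply, AddSubgroup.coe_add]
  exact add_mem (Submodule.mem_sup_left (hN d hy)) (Submodule.mem_sup_right (hN' d hy'))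

include 𝒜 in
theorem span_isHomogeneous {S : Set M} (hS : ∀ s ∈ S, SetLike.IsHomogeneousElem ℳ s) :
    (Submodule.span A S).IsHomogeneous ℳ := by
  intro d x hx
  have hS_eq : S = ⋃ k, {s ∈ S | s ∈ ℳ k} := by
    ext s
    simp only [Set.mem_iUnion, Set.mem_ofPred_eq]
    exact ⟨fun h => (hS s h).imp fun _ hk => ⟨h, hk⟩, fun ⟨_, h, _⟩ => h⟩
  rw [hS_eq] at hx
  refine Submodule.span_mono ?_
    (coe_decompose_mem_span_biUnion_le 𝒜 ℳ (fun k => Set.sep_subset_ofPred _ _) hx d)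
  exact Set.iUnion₂_subset fun k _ => Set.sep_subset _ _

include 𝒜 in
theorem coe_decompose_eq_zero_of_mem_span_ge {n : ℕ} {x : M}
    (hx : x ∈ Submodule.span A {m : M | ∃ k, n ≤ k ∧ m ∈ ℳ k}) {d : ℕ} (hd : d < n) :
    (decompose ℳ x d : M) = 0 := by
  have hx' : x ∈ Submodule.span A (⋃ k, {m : M | n ≤ k ∧ m ∈ ℳ k}) := by
    simpa only [Set.ofPred_exists] using hx
  have hempty : (⋃ k ≤ d, {m : M | n ≤ k ∧ m ∈ ℳ k}) = ∅ :=
    Set.subset_empty_iff.mp (Set.iUnion₂_subset fun k hk _ h => absurd h.1 (by omega))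
  simpa [hempty] using coe_decompose_mem_span_biUnion_le 𝒜 ℳ (fun k _ h => h.2) hx' d

include 𝒜 in
theorem span_eq_top_iff_forall_span_mkQ_image_eq_top {S : Set M}
    (hS : ∀ s ∈ S, SetLike.IsHomogeneousElem ℳ s) :
    Submodule.span A S = ⊤ ↔ ∀ n,
      Submodule.span A ((Submodule.span A {m : M | ∃ k, n ≤ k ∧ m ∈ ℳ k}).mkQ '' S) = ⊤ := by
  simp_rw [Submodule.span_image, Submodule.map_mkQ_eq_top]
  refine ⟨fun h n => by rw [h, sup_top_eq],
    fun h => eq_top_of_forall_mem_of_mem ℳ fun k m hm => ?_⟩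
  obtain ⟨t, ht, s, hs, rfl⟩ := Submodule.mem_sup.mp (Submodule.eq_top_iff'.mp (h (k + 1)) m)
  rw [← decompose_of_mem_same ℳ hm, decompose_add, DirectSum.add_apply, AddSubgroup.coe_add,
    coe_decompose_eq_zero_of_mem_span_ge 𝒜 ℳ ht (Nat.lt_succ_self k), zero_add]
  exact span_isHomogeneous 𝒜 ℳ hS k hs

theorem coe_decompose_mem_span_lt_of_mem_smul_top {x : M}
    (hx : x ∈ Ideal.span {a : A | ∃ k, 1 ≤ k ∧ a ∈ 𝒜 k} • (⊤ : Submodule A M)) (d : ℕ) :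
    (decompose ℳ x d : M) ∈ Submodule.span A (⋃ e < d, (ℳ e : Set M)) := by
  set g : ℕ → Set M :=
    fun k => {y | ∃ i j, 1 ≤ i ∧ i + j = k ∧ ∃ a ∈ 𝒜 i, ∃ m ∈ ℳ j, a • m = y}
  have hgk : ∀ k, g k ⊆ ℳ k := by
    rintro _ _ ⟨i, j, -, rfl, a, ha, m, hm, rfl⟩
    exact SetLike.GradedSMul.smul_mem ha hm
  have hxg : x ∈ Submodule.span A (⋃ k, g k) := by
    rw [← span_iUnion_eq_top ℳ, Submodule.span_smul_span] at hx
    refine Submodule.span_mono ?_ hx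
    rintro _ ⟨a, ⟨i, hi, ha⟩, m, hm, rfl⟩
    obtain ⟨j, hm⟩ := Set.mem_iUnion.mp hm
    exact Set.mem_iUnion_of_mem (i + j) ⟨i, j, hi, rfl, a, ha, m, hm, rfl⟩
  refine Submodule.span_le.mpr ?_ (coe_decompose_mem_span_biUnion_le 𝒜 ℳ hgk hxg d)
  rintro _ hy
  obtain ⟨k, hk, i, j, hi, rfl, a, -, m, hm, rfl⟩ := Set.mem_iUnion₂.mp hy
  exact Submodule.smul_mem _ a (Submodule.subset_span (Set.mem_iUnion₂_of_mem (by omega) hm))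

theorem eq_top_of_isHomogeneous_of_sup_smul_top_eq_top {N : Submodule A M}
    (hN : N.IsHomogeneous ℳ)
    (h : N ⊔ Ideal.span {a : A | ∃ k, 1 ≤ k ∧ a ∈ 𝒜 k} • (⊤ : Submodule A M) = ⊤) :
    N = ⊤ := by
  refine eq_top_of_forall_mem_of_mem ℳ fun d => ?_
  induction d using Nat.strong_induction_on with
  | _ d ih =>
    intro m hm
    obtain ⟨n, hn, y, hy, rfl⟩ := Submodule.mem_sup.mp (Submodule.eq_top_iff'.mp h m)
    rw [← decompose_of_mem_same ℳ hm, decompose_add, DirectSum.add_apply, AddSubgroup.coe_add]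
    refine add_mem (hN d hn) (Submodule.span_le.mpr ?_
      (coe_decompose_mem_span_lt_of_mem_smul_top 𝒜 ℳ hy d))
    exact Set.iUnion₂_subset fun e he => ih e he

end GradedModule

theorem Ideal.span_image_mk_eq_top_iff {A : Type u} [CommRing A] {B : Type v} [CommRing B]
    [Algebra A B] (K : Ideal B) (S : Set B) :
    Submodule.span A (Ideal.Quotient.mk K '' S) = ⊤ ↔
      Submodule.span A S ⊔ K.restrictScalars A = ⊤ := by
  have hker : LinearMap.ker (Ideal.Quotient.mkₐ A K).toLinearMap = K.restrictScalars A := by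
    ext x
    simp [Ideal.Quotient.eq_zero_iff_mem]
  rw [← hker, ← LinearMap.map_eq_top_iff
    (LinearMap.range_eq_top.mpr Ideal.Quotient.mk_surjective), Submodule.map_span]
  rfl

namespace GradedAlgebra

variable {A : Type u} [CommRing A] (𝒜 : ℕ → AddSubgroup A)
  {B : Type v} [CommRing B] [Algebra A B] (ℬ : ℕ → AddSubgroup B) [GradedRing ℬ]

theorem gradedSMul_of_algebraMap_mem (h : ∀ n, ∀ a ∈ 𝒜 n, algebraMap A B a ∈ ℬ n) :
    SetLike.GradedSMul 𝒜 ℬ where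
  smul_mem _ _ _ _ ha hb := by
    rw [Algebra.smul_def]
    exact SetLike.mul_mem_graded (h _ _ ha) hb

theorem span_image_mk_eq_top_iff [GradedRing 𝒜]
    (h𝒜ℬ : ∀ n, ∀ a ∈ 𝒜 n, algebraMap A B a ∈ ℬ n) {J : Ideal B} (hJ : J.IsHomogeneous ℬ)
    {S : Set B} (hS : ∀ s ∈ S, SetLike.IsHomogeneousElem ℬ s) :
    Submodule.span A (Ideal.Quotient.mk J '' S) = ⊤ ↔
      Submodule.span A (Ideal.Quotient.mk (J ⊔ Ideal.span
        (algebraMap A B '' {a : A | ∃ k, 1 ≤ k ∧ a ∈ 𝒜 k})) '' S) = ⊤ := by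
  have := gradedSMul_of_algebraMap_mem 𝒜 ℬ h𝒜ℬ
  rw [Ideal.span_image_mk_eq_top_iff, Ideal.span_image_mk_eq_top_iff,
    Submodule.restrictScalars_sup, ← Ideal.map_span, ← Ideal.smul_top_eq_map, ← sup_assoc]
  refine ⟨fun h => by rw [h, top_sup_eq],
    GradedModule.eq_top_of_isHomogeneous_of_sup_smul_top_eq_top 𝒜 ℬ ?_⟩
  exact GradedModule.isHomogeneous_sup ℬ (GradedModule.span_isHomogeneous 𝒜 ℬ hS) hJ

end GradedAlgebra

/-- Lemma `lmGrAB`.  Let `A = ⊕_{n ∈ ℕ} A_n` be a graded ring.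
(1) Let `M = ⊕_{n ∈ ℕ} M_n` be a graded `A`-module and `S` a set of homogeneous
    elements of `M`.  Then `M` is generated by `S` as an `A`-module if and only if
    for every `n ≥ 0` the `A/A_{≥n}`-module `M/M_{≥n}` is generated by the image of
    `S`.
(2) Let `A → B = ⊕_{n ∈ ℕ} B_n` be a morphism of graded rings,
    `J = ⊕_{n ∈ ℕ} J_n ⊆ B` a graded ideal, and `S ⊆ B` a set of homogeneous
    elements.  Then the `A`-module `B/J` is generated by the image of `S` if and
    only if the `A/A_{≥1}`-module `B/(J + A_{≥1}B)` is generated by the image of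
    `S`. -/
theorem graded_generation_criterion
    {A : Type u} [CommRing A] (𝒜 : ℕ → AddSubgroup A) [GradedRing 𝒜] :
    (∀ (M : Type v) [AddCommGroup M] [Module A M] (ℳ : ℕ → AddSubgroup M)
        [SetLike.GradedSMul 𝒜 ℳ] [DirectSum.Decomposition ℳ] (S : Set M),
        (∀ s ∈ S, SetLike.IsHomogeneousElem ℳ s) →
        (Submodule.span A S = ⊤ ↔
          ∀ n : ℕ,
            Submodule.span A
              ((Submodule.span A {m : M | ∃ k, n ≤ k ∧ m ∈ ℳ k}).mkQ '' S) = ⊤)) ∧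
      (∀ (B : Type v) [CommRing B] [Algebra A B] (ℬ : ℕ → AddSubgroup B)
          [GradedRing ℬ],
          (∀ n : ℕ, ∀ a ∈ 𝒜 n, algebraMap A B a ∈ ℬ n) →
          ∀ J : Ideal B, J.IsHomogeneous ℬ →
            ∀ S : Set B, (∀ s ∈ S, SetLike.IsHomogeneousElem ℬ s) →
              (Submodule.span A ((Ideal.Quotient.mk J) '' S) = ⊤ ↔
                Submodule.span A
                  ((Ideal.Quotient.mk (J ⊔ Ideal.span
                    ((algebraMap A B) '' {a : A | ∃ k, 1 ≤ k ∧ a ∈ 𝒜 k}))) ''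
                      S) = ⊤)) :=
  ⟨fun _ _ _ ℳ _ _ _ hS => GradedModule.span_eq_top_iff_forall_span_mkQ_image_eq_top 𝒜 ℳ hS,
    fun _ _ _ ℬ _ h𝒜ℬ _ hJ _ hS => GradedAlgebra.span_image_mk_eq_top_iff 𝒜 ℬ h𝒜ℬ hJ hS⟩
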